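/- The Fock space 𝓕 is cyclic over the lowering operators: the smallest K-linear subspace of 𝓕 containing the vacuum vector |0⟩ (the basis vector indexed by the identically zero pyramid) and stable under the operators F_J for all real intervals J is 𝓕 itself. -/

import Mathlib

noncomputable section
open Function
open scoped Classical

/-- The `ℕ`-valued indicator function of the interval `[a, b)`. -/
def ind (a b : ℝ) : ℝ → ℕ := (Set.Ico a b).indicator fun _ => 1

/-- A real pyramid: a function `p : ℝ → ℕ` vanishing outside a bounded set, maximal at `0`,
nondecreasing on `(-∞, 0]`, nonincreasing on `[0, ∞)`, right-continuous and piecewise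
constant with finitely many discontinuities, and with jumps of size at most 1
(`p₋(x)` is the left limit of `p` at `x`). -/
def IsRealPyramid (p : ℝ → ℕ) : Prop :=
  (∃ M : ℝ, ∀ x : ℝ, M ≤ |x| → p x = 0) ∧
  (∀ x, p x ≤ p 0) ∧
  (∀ ⦃x y : ℝ⦄, x ≤ y → y ≤ 0 → p x ≤ p y) ∧
  (∀ ⦃x y : ℝ⦄, 0 ≤ x → x ≤ y → p y ≤ p x) ∧
  (∀ x, ContinuousWithinAt p (Set.Ici x) x) ∧
  {x : ℝ | ¬ ContinuousAt p x}.Finite ∧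
  (∀ x, |(p x : ℤ) - ((Function.leftLim p x : ℕ) : ℤ)| ≤ 1)

/-- The interval `[a, b)` is addable for `p` if `p + 1_{[a,b)}` is again a real pyramid. -/
def Addable (p : ℝ → ℕ) (a b : ℝ) : Prop := IsRealPyramid (fun x => p x + ind a b x)

/-- The interval `[a, b)` is removable for `p` if `p ≥ 1` on `[a, b)` and `p − 1_{[a,b)}`
is again a real pyramid. -/
def Removable (p : ℝ → ℕ) (a b : ℝ) : Prop :=
  (∀ x ∈ Set.Ico a b, 1 ≤ p x) ∧ IsRealPyramid (fun x => p x - ind a b x)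

/-- `n_J(p)`: `1` if `J = [a,b)` is addable for `p`, `−1` if removable, `0` otherwise. -/
def nJ (p : ℝ → ℕ) (a b : ℝ) : ℤ :=
  if Addable p a b then 1 else if Removable p a b then -1 else 0

/-- The base field `K = ℚ(t)`. -/
abbrev K : Type := RatFunc ℚ

/-- The variable `t ∈ K` (playing the role of `υ^{1/2}`). -/
def tK : K := RatFunc.X

/-- The quantum parameter `v := t²`. -/
def vK : K := tK ^ 2

/-- The type of real pyramids. -/
def Pyr : Type := {p : ℝ → ℕ // IsRealPyramid p}

/-- The Fock space: the `K`-vector space with basis `|p⟩` indexed by real pyramids. -/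
abbrev Fock : Type := Pyr →₀ K

/-- `E_J |p⟩ = −t·(−v)^{p(b)−p(a)} |p − 1_J⟩` if `J = [a,b)` is removable for `p`,
and `0` otherwise. -/
def Evec (a b : ℝ) (p : Pyr) : Fock :=
  if h : Removable p.1 a b then
    Finsupp.single ⟨fun x => p.1 x - ind a b x, h.2⟩
      (-tK * (-vK) ^ ((p.1 b : ℤ) - (p.1 a : ℤ)))
  else 0

/-- `F_J |p⟩ = t·(−v)^{p(a)−p(b)} |p + 1_J⟩` if `J = [a,b)` is addable for `p`,
and `0` otherwise. -/
def Fvec (a b : ℝ) (p : Pyr) : Fock :=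
  if h : Addable p.1 a b then
    Finsupp.single ⟨fun x => p.1 x + ind a b x, h⟩
      (tK * (-vK) ^ ((p.1 a : ℤ) - (p.1 b : ℤ)))
  else 0

/-- The `K`-linear operator `E_J` on the Fock space. -/
def Eop (a b : ℝ) : Fock →ₗ[K] Fock :=
  Finsupp.lsum K fun p => LinearMap.toSpanSingleton K Fock (Evec a b p)

/-- The `K`-linear operator `F_J` on the Fock space. -/
def Fop (a b : ℝ) : Fock →ₗ[K] Fock :=
  Finsupp.lsum K fun p => LinearMap.toSpanSingleton K Fock (Fvec a b p)

/-- The `K`-linear operator `K_J` on the Fock space: `K_J |p⟩ = v^{n_J(p)} |p⟩`. -/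
def Kop (a b : ℝ) : Fock →ₗ[K] Fock :=
  Finsupp.lsum K fun p =>
    LinearMap.toSpanSingleton K Fock (Finsupp.single p (vK ^ (nJ p.1 a b)))

/-- The `K`-linear operator `K_J⁻¹` on the Fock space: `K_J⁻¹ |p⟩ = v^{−n_J(p)} |p⟩`. -/
def Kinvop (a b : ℝ) : Fock →ₗ[K] Fock :=
  Finsupp.lsum K fun p =>
    LinearMap.toSpanSingleton K Fock (Finsupp.single p (vK ^ (-nJ p.1 a b)))

/-- The identically zero function is a real pyramid. -/
lemma isRealPyramid_zero : IsRealPyramid (fun _ => 0) := by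
  refine ⟨⟨0, fun x _ => rfl⟩, fun x => le_rfl, fun x y _ _ => le_rfl, fun x y _ _ => le_rfl,
    fun x => continuous_const.continuousAt.continuousWithinAt, ?_, ?_⟩
  · convert Set.finite_empty
    ext x
    simp [continuous_const.continuousAt]
  · intro x
    rw [leftLim_eq_of_tendsto tendsto_const_nhds]
    simp

/-- The vacuum vector `|0⟩`, the basis vector indexed by the zero pyramid. -/
def vac : Fock := Finsupp.single ⟨fun _ => 0, isRealPyramid_zero⟩ 1

/-!
Induction on the height `p 0`. If `p 0 > 0`, the plateau `{x | p x = p 0}` is an interval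
`[a, b)`: it is order-connected because `p` is unimodal, and right-continuity forces it to
contain its infimum but not its supremum. The truncation `q = min p (p 0 - 1)` is a pyramid of
smaller height with `q + 1_{[a,b)} = p`, so `F_{[a,b)} |q⟩` is a nonzero multiple of `|p⟩`.
-/

open Set Filter Topology

lemma ContinuousWithinAt.eventually_eq_of_discreteTopology {X Y : Type*} [TopologicalSpace X]
    [TopologicalSpace Y] [DiscreteTopology Y] {f : X → Y} {s : Set X} {x : X}
    (h : ContinuousWithinAt f s x) : ∀ᶠ y in 𝓝[s] x, f y = f x :=
  h ((isOpen_discrete {f x}).mem_nhds rfl)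

/-- Since the discontinuities are isolated, `f` is constant on some `(y, x)`. -/
lemma eventually_nhdsLT_eq_leftLim {Y : Type*} [TopologicalSpace Y] [DiscreteTopology Y]
    {f : ℝ → Y} (hf : {x | ¬ContinuousAt f x}.Finite) (x : ℝ) :
    ∀ᶠ y in 𝓝[<] x, f y = leftLim f x := by
  have hnhds : ({x | ¬ContinuousAt f x} \ {x})ᶜ ∈ 𝓝[<] x :=
    mem_nhdsWithin_of_mem_nhds ((hf.sdiff).isClosed.isOpen_compl.mem_nhds (by simp))
  obtain ⟨y, hyx : y < x, hsub⟩ := mem_nhdsLT_iff_exists_Ioo_subset.1 hnhds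
  have hcont : ContinuousOn f (Ioo y x) := fun z hz =>
    (not_not.1 fun h => hsub hz ⟨h, hz.2.ne⟩).continuousWithinAt
  have hmid : (y + x) / 2 ∈ Ioo y x := ⟨by linarith, by linarith⟩
  have hconst : ∀ᶠ z in 𝓝[<] x, f z = f ((y + x) / 2) :=
    mem_of_superset (Ioo_mem_nhdsLT hyx) fun z hz => isPreconnected_Ioo.constant hcont hz hmid
  have hlim : leftLim f x = f ((y + x) / 2) :=
    leftLim_eq_of_tendsto (tendsto_const_nhds.congr' (hconst.mono fun _ h => h.symm))
  simpa only [hlim] using hconst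

lemma Set.eq_Ico_csInf_csSup {S : Set ℝ} (hS : S.OrdConnected) (hne : S.Nonempty)
    (hbelow : BddBelow S) (habove : BddAbove S) (hmem : ∀ x ∈ S, S ∈ 𝓝[≥] x)
    (hnotMem : ∀ x ∉ S, Sᶜ ∈ 𝓝[≥] x) : S = Ico (sInf S) (sSup S) := by
  have hinf : sInf S ∈ S := by
    by_contra h
    obtain ⟨u, hu, hsub⟩ := mem_nhdsGE_iff_exists_Ico_subset.1 (hnotMem _ h)
    have : u ≤ sInf S := le_csInf hne fun s hs =>
      not_lt.1 fun hsu => hsub ⟨csInf_le hbelow hs, hsu⟩ hs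
    exact not_le.2 (mem_Ioi.1 hu) this
  have hsup : sSup S ∉ S := by
    intro h
    obtain ⟨u, hu, hsub⟩ := mem_nhdsGE_iff_exists_Ico_subset.1 (hmem _ h)
    obtain ⟨c, hc, hcu⟩ := exists_between (mem_Ioi.1 hu)
    exact not_le.2 hc (le_csSup habove (hsub ⟨hc.le, hcu⟩))
  ext x
  refine ⟨fun hx => ⟨csInf_le hbelow hx, (le_csSup habove hx).lt_of_ne ?_⟩, fun hx => ?_⟩
  · rintro rfl
    exact hsup hx
  · obtain ⟨s, hs, hxs⟩ := exists_lt_of_lt_csSup hne hx.2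
    exact hS.out hinf hs ⟨hx.1, hxs.le⟩

namespace IsRealPyramid

variable {p : ℝ → ℕ}

lemma comp (hp : IsRealPyramid p) {g : ℕ → ℕ} (hg0 : g 0 = 0) (hg : Monotone g)
    (hlip : ∀ m n : ℕ, |(g m : ℤ) - g n| ≤ |(m : ℤ) - n|) : IsRealPyramid (g ∘ p) := by
  obtain ⟨⟨M, hM⟩, hmax, hmono, hanti, hright, hfin, hjump⟩ := hp
  have hgc : Continuous g := continuous_of_discreteTopology
  refine ⟨⟨M, fun x hx => by simp [hM x hx, hg0]⟩, fun x => hg (hmax x),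
    fun x y hxy hy => hg (hmono hxy hy), fun x y hx hxy => hg (hanti hx hxy),
    fun x => hgc.continuousAt.comp_continuousWithinAt (hright x),
    hfin.subset fun x hx h => hx (hgc.continuousAt.comp h), fun x => ?_⟩
  have hleft : leftLim (g ∘ p) x = g (leftLim p x) :=
    leftLim_eq_of_tendsto (tendsto_const_nhds.congr'
      ((eventually_nhdsLT_eq_leftLim hfin x).mono fun y hy => by simp [hy]))
  rw [hleft]
  exact (hlip _ _).trans (hjump x)

lemma min_const (hp : IsRealPyramid p) (c : ℕ) : IsRealPyramid fun x => min (p x) c :=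
  hp.comp (g := fun n => min n c) (by simp) (fun _ _ h => min_le_min_right c h) fun m n => by
    push_cast
    exact (abs_min_sub_min_le_max _ _ _ _).trans (by simp)

lemma exists_Ico_eq_top (hp : IsRealPyramid p) (h0 : 0 < p 0) :
    ∃ a b, a < b ∧ Ico a b = {x | p x = p 0} := by
  obtain ⟨⟨M, hM⟩, hmax, hmono, hanti, hright, -, -⟩ := hp
  set S := {x | p x = p 0}
  have hbdd : S ⊆ Icc (-M) M := fun x hx => by
    have : |x| < M := not_le.1 fun h => h0.ne' (hx.symm.trans (hM x h))
    exact ⟨(abs_lt.1 this).1.le, (abs_lt.1 this).2.le⟩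
  have hS : S.OrdConnected := ⟨fun x hx y hy z hz => le_antisymm (hmax z) <| by
    rcases le_total z 0 with h | h
    · exact hx ▸ hmono hz.1 h
    · exact hy ▸ hanti h hz.2⟩
  have hloc : ∀ x, ∀ᶠ y in 𝓝[≥] x, p y = p x := fun x =>
    (hright x).eventually_eq_of_discreteTopology
  have hSeq := Set.eq_Ico_csInf_csSup hS ⟨0, rfl⟩ (bddBelow_Icc.mono hbdd)
    (bddAbove_Icc.mono hbdd)
    (fun x hx => (hloc x).mono fun y hy => hy.trans hx)
    (fun x hx => (hloc x).mono fun y hy => hy.trans_ne hx)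
  exact ⟨_, _, nonempty_Ico.1 (hSeq ▸ ⟨0, rfl⟩), hSeq.symm⟩

lemma exists_add_ind_eq (hp : IsRealPyramid p) (h0 : 0 < p 0) :
    ∃ q, IsRealPyramid q ∧ q 0 < p 0 ∧ ∃ a b, a < b ∧ ∀ x, q x + ind a b x = p x := by
  obtain ⟨a, b, hab, hplateau⟩ := hp.exists_Ico_eq_top h0
  refine ⟨_, hp.min_const (p 0 - 1), by omega, a, b, hab, fun x => ?_⟩
  have hx := hp.2.1 x
  have hmem : x ∈ Ico a b ↔ p x = p 0 := hplateau ▸ Iff.rfl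
  by_cases h : p x = p 0
  · rw [ind, indicator_of_mem (hmem.2 h)]
    omega
  · rw [ind, indicator_of_notMem (mt hmem.1 h)]
    omega

end IsRealPyramid

lemma Fop_single (a b : ℝ) (q : Pyr) (c : K) :
    Fop a b (Finsupp.single q c) = c • Fvec a b q := by
  simp [Fop]

lemma Fvec_eq_single_of_add_ind_eq {a b : ℝ} {q p : Pyr} (h : ∀ x, q.1 x + ind a b x = p.1 x) :
    ∃ c ≠ 0, Fvec a b q = Finsupp.single p c := by
  have hqp : (fun x => q.1 x + ind a b x) = p.1 := funext h
  have hadd : Addable q.1 a b := by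
    rw [Addable, hqp]
    exact p.2
  rw [Fvec, dif_pos hadd]
  refine ⟨_, ?_, congrArg (Finsupp.single · _) (Subtype.ext hqp)⟩
  exact mul_ne_zero RatFunc.X_ne_zero
    (zpow_ne_zero _ (neg_ne_zero.2 (pow_ne_zero 2 RatFunc.X_ne_zero)))

lemma single_one_mem_of_add_ind_eq {W : Submodule K Fock} {a b : ℝ}
    (hW : ∀ x ∈ W, Fop a b x ∈ W) {q p : Pyr} (h : ∀ x, q.1 x + ind a b x = p.1 x)
    (hq : Finsupp.single q 1 ∈ W) : Finsupp.single p 1 ∈ W := by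
  obtain ⟨c, hc, hFv⟩ := Fvec_eq_single_of_add_ind_eq h
  have hpc : Finsupp.single p c ∈ W := by
    simpa [Fop_single, hFv] using hW _ hq
  simpa [Finsupp.smul_single, hc] using W.smul_mem c⁻¹ hpc

/-- every `K`-linear subspace of the Fock space containing the vacuum
vector and stable under all the operators `F_J` is the whole Fock space; i.e. the Fock
space is cyclic over the lowering operators. -/
theorem fock_cyclic_over_F (W : Submodule K Fock)
    (hvac : vac ∈ W)
    (hF : ∀ a b : ℝ, a < b → ∀ x ∈ W, Fop a b x ∈ W) :
    W = ⊤ := by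
  suffices h : ∀ p : Pyr, Finsupp.single p 1 ∈ W by
    rw [eq_top_iff, ← Finsupp.basisSingleOne.span_eq, Submodule.span_le]
    rintro _ ⟨p, rfl⟩
    simpa using h p
  intro p
  induction hn : p.1 0 using Nat.strong_induction_on generalizing p with
  | _ n ih =>
    rcases Nat.eq_zero_or_pos n with rfl | hpos
    · obtain rfl : p = ⟨fun _ => 0, isRealPyramid_zero⟩ :=
        Subtype.ext (funext fun x => Nat.le_zero.1 (hn ▸ p.2.2.1 x))
      exact hvac
    · obtain ⟨q, hq, hq0, a, b, hab, hqp⟩ := p.2.exists_add_ind_eq (hn ▸ hpos)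
      exact single_one_mem_of_add_ind_eq (hF a b hab) (q := ⟨q, hq⟩) hqp
        (ih _ (hn ▸ hq0) _ rfl)
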